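/- For two points z, z' in the upper half-plane, |z-ρ|/|z-ρ⁻¹| = |z'-ρ|/|z'-ρ⁻¹| if and only if Im(z)/|z-ρ⁻¹|² = Im(z')/|z'-ρ⁻¹|², where ρ = exp(πi/3). -/

import Mathlib

open Complex Real

noncomputable def ρ : ℂ := Complex.exp (Real.pi * Complex.I / 3)

/-!
Reflecting `w` in the real axis changes `‖z - w‖²` by `4 · Im w · Im z`, so the squared
Apollonius ratio `(‖z - w‖ / ‖z - w̄‖)²` equals `1 - 4 · Im w · Im z / ‖z - w̄‖²`, an affine
function of the second quantity. As the ratio is nonnegative, it determines and is determined by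
`Im z / ‖z - w̄‖²` when `Im w ≠ 0`. For `w = ρ` we have `ρ⁻¹ = ρ̄` because `‖ρ‖ = 1`.
-/

open ComplexConjugate

namespace Complex

lemma norm_sub_sq_eq_norm_sub_conj_sq_sub (z w : ℂ) :
    ‖z - w‖ ^ 2 = ‖z - conj w‖ ^ 2 - 4 * w.im * z.im := by
  simp only [Complex.sq_norm, normSq_apply, sub_re, sub_im, conj_re, conj_im]
  ring

lemma div_norm_sub_conj_sq (z w : ℂ) (hz : z ≠ conj w) :
    (‖z - w‖ / ‖z - conj w‖) ^ 2 = 1 - 4 * w.im * (z.im / ‖z - conj w‖ ^ 2) := by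
  have hne : ‖z - conj w‖ ^ 2 ≠ 0 :=
    pow_ne_zero 2 (norm_ne_zero_iff.mpr (sub_ne_zero.mpr hz))
  rw [div_pow, norm_sub_sq_eq_norm_sub_conj_sq_sub, sub_div, div_self hne, mul_div_assoc]

lemma apollonius_ratio_eq_iff {w z z' : ℂ} (hw : w.im ≠ 0) (hz : z ≠ conj w)
    (hz' : z' ≠ conj w) :
    ‖z - w‖ / ‖z - conj w‖ = ‖z' - w‖ / ‖z' - conj w‖ ↔
      z.im / ‖z - conj w‖ ^ 2 = z'.im / ‖z' - conj w‖ ^ 2 := by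
  have h4w : 4 * w.im ≠ 0 := mul_ne_zero four_ne_zero hw
  rw [← sq_eq_sq₀ (by positivity) (by positivity), div_norm_sub_conj_sq z w hz,
    div_norm_sub_conj_sq z' w hz', sub_right_inj, mul_right_inj' h4w]

lemma ne_conj_of_im_pos {z w : ℂ} (hz : 0 < z.im) (hw : 0 < w.im) : z ≠ conj w := by
  rintro rfl
  simp only [conj_im] at hz
  linarith

end Complex

lemma ρ_eq_exp : ρ = Complex.exp ((Real.pi / 3 : ℝ) * Complex.I) := by
  rw [ρ]
  congr 1
  push_cast
  ring

lemma ρ_inv_eq_conj : ρ⁻¹ = conj ρ :=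
  inv_eq_conj (by rw [ρ_eq_exp, norm_exp_ofReal_mul_I])

lemma ρ_im_pos : 0 < ρ.im := by
  rw [ρ_eq_exp, exp_ofReal_mul_I_im]
  exact Real.sin_pos_of_pos_of_lt_pi (by positivity) (by linarith [Real.pi_pos])

theorem stmt8 (z z' : ℂ) (hz : 0 < z.im) (hz' : 0 < z'.im) :
    ‖z - ρ‖ / ‖z - ρ⁻¹‖ =
        ‖z' - ρ‖ / ‖z' - ρ⁻¹‖ ↔
      z.im / (‖z - ρ⁻¹‖) ^ 2 = z'.im / (‖z' - ρ⁻¹‖) ^ 2 := by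
  rw [ρ_inv_eq_conj]
  exact apollonius_ratio_eq_iff ρ_im_pos.ne' (ne_conj_of_im_pos hz ρ_im_pos)
    (ne_conj_of_im_pos hz' ρ_im_pos)
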